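/- Let $p$ be a subharmonic, nonharmonic polynomial and define $\Lambda(z,\delta) = \sum_{j,k\ge 1}|A_{jk}(z)|\delta^{j+k}$ where $A_{jk}(z) = \frac{1}{j!k!}\frac{\partial^{j+k}p}{\partial z^j \partial \bar z^k}(z)$, and $\mu(z,\delta) = \inf_{j,k\ge 1}\left(\delta/|A_{jk}(z)|\right)^{1/(j+k)}$ (infimum over indices with $A_{jk}(z)\neq 0$). Then there are constants $c, C > 0$ depending only on the degree of $p$ such that for all $\delta > 0$ and all $z$, $c\,\delta \le \mu(z, \Lambda(z,\delta)) \le C\,\delta$. -/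

import Mathlib

open Finset Complex

/-- The coefficient `A_{jk}(z) = (1/(j!k!)) ∂^{j+k}p/∂z^j∂z̄^k (z)` of the
polynomial `p(z) = ∑_{m,n ≤ d} a m n · z^m · z̄^n`. -/
noncomputable def Acoef (d : ℕ) (a : ℕ → ℕ → ℂ) (j k : ℕ) (z : ℂ) : ℂ :=
  ∑ m ∈ Finset.range (d + 1), ∑ n ∈ Finset.range (d + 1),
    (m.choose j : ℂ) * (n.choose k : ℂ) * a m n * z ^ (m - j) * (starRingEnd ℂ z) ^ (n - k)

/-- The twist `T(w,z) = -2 Im (∑_{j≥1} (1/j!) ∂^j p/∂z^j (z) (w-z)^j)`. -/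
noncomputable def Twist (d : ℕ) (a : ℕ → ℕ → ℂ) (w z : ℂ) : ℝ :=
  -2 * (∑ j ∈ Finset.Icc 1 d, Acoef d a j 0 z * (w - z) ^ j).im

/-- `Λ(z,δ) = ∑_{j,k ≥ 1} |A_{jk}(z)| δ^{j+k}`. -/
noncomputable def Lam (d : ℕ) (a : ℕ → ℕ → ℂ) (z : ℂ) (δ : ℝ) : ℝ :=
  ∑ j ∈ Finset.Icc 1 d, ∑ k ∈ Finset.Icc 1 d,
    ‖Acoef d a j k z‖ * δ ^ (j + k)

/-- `μ(z,δ) = inf_{j,k ≥ 1, A_{jk}(z) ≠ 0} (|δ|/|A_{jk}(z)|)^{1/(j+k)}`. -/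
noncomputable def muF (d : ℕ) (a : ℕ → ℕ → ℂ) (z : ℂ) (δ : ℝ) : ℝ :=
  sInf {x : ℝ | ∃ j k : ℕ, 1 ≤ j ∧ 1 ≤ k ∧ Acoef d a j k z ≠ 0 ∧
    x = (|δ| / ‖Acoef d a j k z‖) ^ (1 / ((j : ℝ) + (k : ℝ)))}

/-- The Wirtinger derivative `∂f/∂z = (1/2)(∂f/∂x - i ∂f/∂y)`. -/
noncomputable def wDz (f : ℂ → ℂ) (z : ℂ) : ℂ :=
  (fderiv ℝ f z 1 - Complex.I * fderiv ℝ f z Complex.I) / 2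

/-- The Wirtinger derivative `∂f/∂z̄ = (1/2)(∂f/∂x + i ∂f/∂y)`. -/
noncomputable def wDzbar (f : ℂ → ℂ) (z : ℂ) : ℂ :=
  (fderiv ℝ f z 1 + Complex.I * fderiv ℝ f z Complex.I) / 2

/-- The nonisotropic pseudodistance `d_{NI}(z,w,t) = |z-w| + μ(z, t+T(w,z))`. -/
noncomputable def dNI (d : ℕ) (a : ℕ → ℕ → ℂ) (z w : ℂ) (t : ℝ) : ℝ :=
  ‖z - w‖ + muF d a z (t + Twist d a w z)

/-! Up to the factors `jk`, the coefficients `A_{jk}(z)` with `j, k ≥ 1` are the Taylor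
coefficients of `∂∂̄p` at `z`, so if `p` is not harmonic they cannot all vanish at any point and
the infimum defining `μ` is over a nonempty set. Each term `|A_{jk}(z)| δ^{j+k}` of `Λ(z,δ)` is
at most `Λ(z,δ)`, which is exactly `μ(z, Λ(z,δ)) ≥ δ`; conversely `Λ(z,δ)` is at most `d²`
times its largest term, and the index of that term gives `μ(z, Λ(z,δ)) ≤ d^{2/(j+k)} δ`. -/

-- The `s`-derivative of the binomial expansion of `(s + z) ^ m`.
theorem sum_Icc_natCast_mul_choose_mul_pow {R : Type*} [CommRing R] {d m : ℕ} (hm : m ≤ d)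
    (z s : R) :
    ∑ j ∈ Icc 1 d, (j : R) * m.choose j * z ^ (m - j) * s ^ (j - 1) = m * (s + z) ^ (m - 1) := by
  have hvanish : ∀ j, m < j → (j : R) * m.choose j * z ^ (m - j) * s ^ (j - 1) = 0 := by
    intro j hj
    simp [Nat.choose_eq_zero_of_lt hj]
  rcases Nat.eq_zero_or_pos m with rfl | hm0
  · simpa using sum_eq_zero fun j hj => hvanish j (mem_Icc.1 hj).1
  obtain ⟨n, rfl⟩ : ∃ n, m = n + 1 := ⟨m - 1, by omega⟩
  rw [← sum_subset (Icc_subset_Icc_right hm) fun j _ hj => hvanish j (by simp_all),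
    ← Ico_add_one_right_eq_Icc, ← zero_add 1, ← sum_Ico_add', ← range_eq_Ico, add_pow, mul_sum]
  refine sum_congr rfl fun i _ => ?_
  have hchoose := congrArg (Nat.cast : ℕ → R) (Nat.add_one_mul_choose_eq n i)
  push_cast at hchoose ⊢
  linear_combination (z ^ (n - i) * s ^ i) * hchoose.symm

theorem Acoef_one_one_eq_sum (d : ℕ) (a : ℕ → ℕ → ℂ) (z w : ℂ) :
    Acoef d a 1 1 w = ∑ j ∈ Icc 1 d, ∑ k ∈ Icc 1 d,
      (j : ℂ) * k * Acoef d a j k z * (w - z) ^ (j - 1) * (starRingEnd ℂ (w - z)) ^ (k - 1) := by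
  have hw : w = (w - z) + z := by ring
  calc Acoef d a 1 1 w
      = ∑ m ∈ range (d + 1), ∑ n ∈ range (d + 1),
          (m * w ^ (m - 1)) * (n * starRingEnd ℂ w ^ (n - 1)) * a m n := by
        simp only [Acoef, Nat.choose_one_right]
        exact sum_congr rfl fun m _ => sum_congr rfl fun n _ => by ring
    _ = ∑ m ∈ range (d + 1), ∑ n ∈ range (d + 1),
          (∑ j ∈ Icc 1 d, (j : ℂ) * m.choose j * z ^ (m - j) * (w - z) ^ (j - 1)) *
          (∑ k ∈ Icc 1 d, (k : ℂ) * n.choose k * starRingEnd ℂ z ^ (n - k) *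
            starRingEnd ℂ (w - z) ^ (k - 1)) * a m n := by
        refine sum_congr rfl fun m hm => sum_congr rfl fun n hn => ?_
        rw [sum_Icc_natCast_mul_choose_mul_pow (mem_range_succ_iff.1 hm),
          sum_Icc_natCast_mul_choose_mul_pow (mem_range_succ_iff.1 hn), ← map_add,
          ← hw]
    _ = _ := by
        simp only [Acoef, sum_mul, mul_sum]
        simp_rw [sum_comm (s := range (d + 1)) (t := Icc 1 d)]
        rw [sum_comm]
        exact sum_congr rfl fun j _ => sum_congr rfl fun k _ =>
          sum_congr rfl fun m _ => sum_congr rfl fun n _ => by ring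

theorem Acoef_eq_zero_of_lt (d : ℕ) (a : ℕ → ℕ → ℂ) {j k : ℕ} (z : ℂ) (h : d < j ∨ d < k) :
    Acoef d a j k z = 0 := by
  refine sum_eq_zero fun m hm => sum_eq_zero fun n hn => ?_
  rw [mem_range] at hm hn
  rcases h with h | h
  · simp [Nat.choose_eq_zero_of_lt (hm.trans_le h)]
  · simp [Nat.choose_eq_zero_of_lt (hn.trans_le h)]

theorem exists_Acoef_ne_zero_of_Acoef_one_one_ne_zero {d : ℕ} {a : ℕ → ℕ → ℂ} {z₀ : ℂ}
    (h : Acoef d a 1 1 z₀ ≠ 0) (z : ℂ) : ∃ j ∈ Icc 1 d, ∃ k ∈ Icc 1 d, Acoef d a j k z ≠ 0 := by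
  by_contra! hzero
  refine h ((Acoef_one_one_eq_sum d a z z₀).trans (sum_eq_zero fun j hj => ?_))
  exact sum_eq_zero fun k hk => by simp [hzero j hj k hk]

section Lam

variable (d : ℕ) (a : ℕ → ℕ → ℂ) (z : ℂ) {δ : ℝ}

theorem norm_Acoef_mul_pow_le_Lam (hδ : 0 ≤ δ) {j k : ℕ} (hj : 1 ≤ j) (hk : 1 ≤ k) :
    ‖Acoef d a j k z‖ * δ ^ (j + k) ≤ Lam d a z δ := by
  have hterm : ∀ j k : ℕ, 0 ≤ ‖Acoef d a j k z‖ * δ ^ (j + k) := fun _ _ => by positivity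
  by_cases hjk : j ≤ d ∧ k ≤ d
  · calc ‖Acoef d a j k z‖ * δ ^ (j + k)
        ≤ ∑ k' ∈ Icc 1 d, ‖Acoef d a j k' z‖ * δ ^ (j + k') :=
          single_le_sum (fun k' _ => hterm j k') (mem_Icc.2 ⟨hk, hjk.2⟩)
      _ ≤ Lam d a z δ :=
          single_le_sum (f := fun j' => ∑ k' ∈ Icc 1 d, ‖Acoef d a j' k' z‖ * δ ^ (j' + k'))
            (fun j' _ => sum_nonneg fun k' _ => hterm j' k') (mem_Icc.2 ⟨hj, hjk.1⟩)
  · rw [Acoef_eq_zero_of_lt d a z (by omega), norm_zero, zero_mul]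
    exact sum_nonneg fun j' _ => sum_nonneg fun k' _ => hterm j' k'

theorem Lam_pos (hδ : 0 < δ) {j k : ℕ} (hj : 1 ≤ j) (hk : 1 ≤ k) (hA : Acoef d a j k z ≠ 0) :
    0 < Lam d a z δ := by
  have hA := norm_pos_iff.2 hA
  exact (by positivity : 0 < ‖Acoef d a j k z‖ * δ ^ (j + k)).trans_le
    (norm_Acoef_mul_pow_le_Lam d a z hδ.le hj hk)

theorem exists_Acoef_ne_zero_Lam_le_sq_mul (hpos : 0 < Lam d a z δ) :
    ∃ j k, 1 ≤ j ∧ 1 ≤ k ∧ Acoef d a j k z ≠ 0 ∧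
      Lam d a z δ ≤ (d : ℝ) ^ 2 * (‖Acoef d a j k z‖ * δ ^ (j + k)) := by
  have hLam : Lam d a z δ = ∑ p ∈ Icc 1 d ×ˢ Icc 1 d, ‖Acoef d a p.1 p.2 z‖ * δ ^ (p.1 + p.2) :=
    (sum_product' _ _ _).symm
  have hne : (Icc 1 d ×ˢ Icc 1 d).Nonempty := by
    by_contra hempty
    rw [not_nonempty_iff_eq_empty.1 hempty, sum_empty] at hLam
    exact hpos.ne' hLam
  obtain ⟨b, hb, hmax⟩ := exists_max_image _
    (fun p => ‖Acoef d a p.1 p.2 z‖ * δ ^ (p.1 + p.2)) hne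
  have hle : Lam d a z δ ≤ (d : ℝ) ^ 2 * (‖Acoef d a b.1 b.2 z‖ * δ ^ (b.1 + b.2)) := by
    calc Lam d a z δ ≤ #(Icc 1 d ×ˢ Icc 1 d) • (‖Acoef d a b.1 b.2 z‖ * δ ^ (b.1 + b.2)) :=
          hLam ▸ sum_le_card_nsmul _ _ _ hmax
      _ = (d : ℝ) ^ 2 * (‖Acoef d a b.1 b.2 z‖ * δ ^ (b.1 + b.2)) := by
          simp [card_product, sq]
  obtain ⟨⟨hb₁, -⟩, ⟨hb₂, -⟩⟩ := mem_product.1 hb |>.imp mem_Icc.1 mem_Icc.1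
  refine ⟨b.1, b.2, hb₁, hb₂, fun hzero => ?_, hle⟩
  rw [hzero, norm_zero, zero_mul, mul_zero] at hle
  exact hpos.not_ge hle

end Lam

theorem le_rpow_one_div_natCast_iff {x c : ℝ} {n : ℕ} (hn : n ≠ 0) (hc : 0 ≤ c) (hx : 0 ≤ x) :
    c ≤ x ^ (1 / (n : ℝ)) ↔ c ^ n ≤ x := by
  rw [one_div, Real.le_rpow_inv_iff_of_pos hc hx (by positivity), Real.rpow_natCast]

theorem rpow_one_div_natCast_le_iff {x c : ℝ} {n : ℕ} (hn : n ≠ 0) (hc : 0 ≤ c) (hx : 0 ≤ x) :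
    x ^ (1 / (n : ℝ)) ≤ c ↔ x ≤ c ^ n := by
  rw [one_div, Real.rpow_inv_le_iff_of_pos hx hc (by positivity), Real.rpow_natCast]

section muF

variable {d : ℕ} {a : ℕ → ℕ → ℂ} {z : ℂ} {t c : ℝ}

theorem le_muF (hc : 0 ≤ c) (hne : ∃ j k, 1 ≤ j ∧ 1 ≤ k ∧ Acoef d a j k z ≠ 0)
    (h : ∀ j k, 1 ≤ j → 1 ≤ k → ‖Acoef d a j k z‖ * c ^ (j + k) ≤ |t|) : c ≤ muF d a z t := by
  obtain ⟨j₀, k₀, hj₀, hk₀, hA₀⟩ := hne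
  refine le_csInf ⟨_, j₀, k₀, hj₀, hk₀, hA₀, rfl⟩ ?_
  rintro _ ⟨j, k, hj, hk, hA, rfl⟩
  rw [← Nat.cast_add, le_rpow_one_div_natCast_iff (by omega) hc (by positivity),
    le_div_iff₀ (norm_pos_iff.2 hA), mul_comm]
  exact h j k hj hk

theorem muF_le (hc : 0 ≤ c) {j k : ℕ} (hj : 1 ≤ j) (hk : 1 ≤ k) (hA : Acoef d a j k z ≠ 0)
    (h : |t| ≤ ‖Acoef d a j k z‖ * c ^ (j + k)) : muF d a z t ≤ c := by
  refine csInf_le_of_le ⟨0, ?_⟩ ⟨j, k, hj, hk, hA, rfl⟩ ?_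
  · rintro _ ⟨j, k, -, -, -, rfl⟩
    positivity
  rw [← Nat.cast_add, rpow_one_div_natCast_le_iff (by omega) hc (by positivity),
    div_le_iff₀ (norm_pos_iff.2 hA), mul_comm]
  exact h

end muF

/-- For a subharmonic, nonharmonic polynomial `p` of degree `d` (encoded by
coefficients `a`), `μ(z, Λ(z,δ)) ∼ δ` with constants depending only on `d`. -/
theorem mu_lam_approx_inverse (d : ℕ) :
    ∃ c C : ℝ, 0 < c ∧ 0 < C ∧
      ∀ a : ℕ → ℕ → ℂ,
        (∀ m n, d < m + n → a m n = 0) →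
        (∀ m n, (starRingEnd ℂ) (a m n) = a n m) →
        (∀ z : ℂ, 0 ≤ (Acoef d a 1 1 z).re) →
        (∃ z₀ : ℂ, Acoef d a 1 1 z₀ ≠ 0) →
        ∀ (z : ℂ) (δ : ℝ), 0 < δ →
          c * δ ≤ muF d a z (Lam d a z δ) ∧ muF d a z (Lam d a z δ) ≤ C * δ := by
  refine ⟨1, (d : ℝ) ^ 2 + 1, one_pos, by positivity, ?_⟩
  rintro a - - - ⟨z₀, hz₀⟩ z δ hδ
  obtain ⟨j₀, hj₀, k₀, hk₀, hA₀⟩ := exists_Acoef_ne_zero_of_Acoef_one_one_ne_zero hz₀ z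
  rw [mem_Icc] at hj₀ hk₀
  have hLam_pos := Lam_pos d a z hδ hj₀.1 hk₀.1 hA₀
  constructor
  · rw [one_mul]
    exact le_muF hδ.le ⟨j₀, k₀, hj₀.1, hk₀.1, hA₀⟩ fun j k hj hk =>
      (norm_Acoef_mul_pow_le_Lam d a z hδ.le hj hk).trans (le_abs_self _)
  · obtain ⟨j, k, hj, hk, hA, hLam⟩ := exists_Acoef_ne_zero_Lam_le_sq_mul d a z hLam_pos
    refine muF_le (by positivity) hj hk hA ?_
    have hd : (d : ℝ) ^ 2 ≤ ((d : ℝ) ^ 2 + 1) ^ (j + k) :=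
      (le_add_of_nonneg_right zero_le_one).trans (le_self_pow₀ (by simp) (by omega))
    calc |Lam d a z δ| = Lam d a z δ := abs_of_pos hLam_pos
      _ ≤ (d : ℝ) ^ 2 * (‖Acoef d a j k z‖ * δ ^ (j + k)) := hLam
      _ ≤ ((d : ℝ) ^ 2 + 1) ^ (j + k) * (‖Acoef d a j k z‖ * δ ^ (j + k)) := by gcongr
      _ = ‖Acoef d a j k z‖ * (((d : ℝ) ^ 2 + 1) * δ) ^ (j + k) := by
        rw [mul_pow]; ring
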